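/- For any Hermitian matrices S and T on a finite-dimensional complex inner product space satisfying 0 ≤ S ≤ I and T ≥ 0, the operator inequality I - (S+T)^{-1/2} S (S+T)^{-1/2} ≤ 2(I - S) + 4T holds, where (S+T)^{-1/2} denotes the square root of the Moore–Penrose pseudoinverse of S+T. -/

import Mathlib

/-!
Put `P = S + T` and let `M` be the pseudoinverse square root of `P`, so that `M` is self-adjoint,
`M P = √P` and `M P M ≤ 1` (it is the support projection of `P`). Once `M` commutes with `P`,
`2 (1 - S) + 4 T - (1 - M S M)
  = (1 - M P M) + 4 (M P - S) + (2 - M) T (2 - M) + 2 (M - 1) S (M - 1)`,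
where the last two summands are conjugates of nonnegative elements, and `M P = √P ≥ S` because
`S² ≤ S ≤ P` and the square root is operator monotone.
-/

noncomputable section

open scoped BigOperators ComplexOrder

open Classical in
/-- The coset state `ρ_H = (1/|G|) ∑_g |gH⟩⟨gH|`; its `(x, y)` entry is
`1/|G|` if `x⁻¹ y ∈ H` and `0` otherwise. -/
def cosetState {G : Type*} [Group G] [Fintype G] (H : Subgroup G) : Matrix G G ℂ :=
  fun x y => if x⁻¹ * y ∈ H then (1 : ℂ) / (Fintype.card G) else 0

/-- `k`-fold tensor power of a matrix. -/
def tensorPow {n : Type*} [Fintype n] (M : Matrix n n ℂ) (k : ℕ) :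
    Matrix (Fin k → n) (Fin k → n) ℂ :=
  fun x y => ∏ i, M (x i) (y i)

/-- Trace norm `‖Y‖₁ = tr √(Yᴴ Y)`. -/
def traceNorm {n : Type*} [Fintype n] [DecidableEq n] (Y : Matrix n n ℂ) : ℝ :=
  (((Matrix.posSemidef_conjTranspose_mul_self Y).isHermitian.eigenvectorUnitary.1 *
      Matrix.diagonal (((↑) : ℝ → ℂ) ∘ (√·) ∘ (Matrix.posSemidef_conjTranspose_mul_self Y).isHermitian.eigenvalues) *
      (star (Matrix.posSemidef_conjTranspose_mul_self Y).isHermitian.eigenvectorUnitary :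
        Matrix n n ℂ)).trace).re

/-- Operator (spectral) norm of a matrix. -/
def opNorm {n : Type*} [Fintype n] [DecidableEq n] (M : Matrix n n ℂ) : ℝ :=
  ‖Matrix.toEuclideanCLM (𝕜 := ℂ) M‖

/-- Square root of the Moore–Penrose pseudoinverse of a Hermitian matrix
(junk value `0` on non-Hermitian input). -/
def pinvSqrt {n : Type*} [Fintype n] [DecidableEq n] (A : Matrix n n ℂ) : Matrix n n ℂ :=
  if h : A.IsHermitian then
    h.eigenvectorUnitary.1 *
      Matrix.diagonal (fun i => ((Real.sqrt (h.eigenvalues i))⁻¹ : ℂ)) *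
      (star h.eigenvectorUnitary : Matrix n n ℂ)
  else 0

theorem hayashiNagaoka_decomposition {R : Type*} [Ring R] {M S T : R} (h : Commute M (S + T)) :
    2 • (1 - S) + 4 • T - (1 - M * S * M) =
      (1 - M * (S + T) * M) + 4 • (M * (S + T) - S) + (2 - M) * T * (2 - M)
        + 2 • ((M - 1) * S * (M - 1)) := by
  rw [← sub_eq_zero]
  calc _ = 2 • ((S + T) * M - M * (S + T)) := by noncomm_ring
    _ = 0 := by rw [h.eq, sub_self, smul_zero]

namespace CFC

variable {A : Type*} [CStarAlgebra A] [PartialOrder A] [StarOrderedRing A]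

lemma mul_self_le_self {a : A} (ha₀ : 0 ≤ a) (ha₁ : a ≤ 1) : a * a ≤ a := by
  obtain ⟨s, hs, rfl⟩ : ∃ s : A, IsSelfAdjoint s ∧ s * s = a :=
    ⟨sqrt a, (sqrt_nonneg a).isSelfAdjoint, sqrt_mul_sqrt_self a⟩
  rw [← sub_nonneg]
  convert hs.conjugate_nonneg (sub_nonneg.2 ha₁) using 1
  noncomm_ring

lemma le_sqrt_add {a b : A} (ha₀ : 0 ≤ a) (ha₁ : a ≤ 1) (hb : 0 ≤ b) : a ≤ sqrt (a + b) :=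
  calc a = sqrt (a * a) := (sqrt_mul_self a).symm
    _ ≤ sqrt (a + b) :=
      sqrt_le_sqrt _ _ <| (mul_self_le_self ha₀ ha₁).trans (le_add_of_nonneg_right hb)

theorem one_sub_conj_le_of_mul_eq_sqrt {S T M : A} (hS₀ : 0 ≤ S) (hS₁ : S ≤ 1) (hT : 0 ≤ T)
    (hM : IsSelfAdjoint M) (hMP : M * (S + T) = sqrt (S + T))
    (hMPM : M * (S + T) * M ≤ 1) :
    1 - M * S * M ≤ 2 • (1 - S) + 4 • T := by
  have hcomm : Commute M (S + T) := by
    have h := congrArg star hMP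
    rw [star_mul, hM.star_eq, (hS₀.isSelfAdjoint.add hT.isSelfAdjoint).star_eq,
      (sqrt_nonneg _).isSelfAdjoint.star_eq, ← hMP] at h
    exact h.symm
  rw [← sub_nonneg, hayashiNagaoka_decomposition hcomm]
  have hproj : 0 ≤ 1 - M * (S + T) * M := sub_nonneg.2 hMPM
  have hsqrt : 0 ≤ M * (S + T) - S := sub_nonneg.2 (hMP ▸ le_sqrt_add hS₀ hS₁ hT)
  have hT' : 0 ≤ (2 - M) * T * (2 - M) := ((IsSelfAdjoint.ofNat 2).sub hM).conjugate_nonneg hT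
  have hS' : 0 ≤ (M - 1) * S * (M - 1) := (hM.sub (.one A)).conjugate_nonneg hS₀
  exact add_nonneg (add_nonneg (add_nonneg hproj (nsmul_nonneg hsqrt 4)) hT')
    (nsmul_nonneg hS' 2)

end CFC

namespace Matrix

variable {n : Type*} [Fintype n] [DecidableEq n]

open scoped MatrixOrder

lemma IsHermitian.pinvSqrt_eq_cfc {A : Matrix n n ℂ} (hA : A.IsHermitian) :
    pinvSqrt A = cfc (fun x : ℝ => (√x)⁻¹) A := by
  rw [hA.cfc_eq, pinvSqrt, dif_pos hA, IsHermitian.cfc, Unitary.conjStarAlgAut_apply]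
  simp [Function.comp_def]

lemma isSelfAdjoint_pinvSqrt (A : Matrix n n ℂ) : IsSelfAdjoint (pinvSqrt A) := by
  by_cases hA : A.IsHermitian
  · rw [hA.pinvSqrt_eq_cfc]
    exact cfc_predicate _ _
  · simp [pinvSqrt, hA]

lemma pinvSqrt_mul_self {A : Matrix n n ℂ} (hA : 0 ≤ A) : pinvSqrt A * A = CFC.sqrt A := by
  rw [(nonneg_iff_posSemidef.1 hA).isHermitian.pinvSqrt_eq_cfc, CFC.sqrt_eq_real_sqrt A,
    cfcₙ_eq_cfc]
  conv_lhs => arg 2; rw [← cfc_id' ℝ A]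
  rw [← cfc_mul _ _ A (A.finite_real_spectrum.continuousOn _)]
  refine cfc_congr fun x hx => ?_
  rcases (spectrum_nonneg_of_nonneg hA hx).eq_or_lt with rfl | hx
  · simp
  · rw [inv_mul_eq_div, div_eq_iff (Real.sqrt_pos.2 hx).ne', Real.mul_self_sqrt hx.le]

lemma pinvSqrt_mul_mul_pinvSqrt_le_one {A : Matrix n n ℂ} (hA : A.IsHermitian) :
    pinvSqrt A * A * pinvSqrt A ≤ 1 := by
  rw [hA.pinvSqrt_eq_cfc]
  conv_lhs => arg 1; arg 2; rw [← cfc_id' ℝ A]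
  rw [← cfc_mul _ _ A (A.finite_real_spectrum.continuousOn _),
    ← cfc_mul _ _ A (A.finite_real_spectrum.continuousOn _)
      (A.finite_real_spectrum.continuousOn _)]
  refine cfc_le_one _ A fun x _ => ?_
  rcases le_or_gt x 0 with hx | hx
  · simp [Real.sqrt_eq_zero'.2 hx]
  · rw [mul_comm, ← mul_assoc, ← mul_inv, Real.mul_self_sqrt hx.le, inv_mul_cancel₀ hx.ne']

end Matrix

open Matrix

/-- Hayashi–Nagaoka operator inequality. -/
theorem hayashi_nagaoka {d : ℕ} (S T : Matrix (Fin d) (Fin d) ℂ)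
    (hS : S.PosSemidef) (hSI : ((1 : Matrix (Fin d) (Fin d) ℂ) - S).PosSemidef)
    (hT : T.PosSemidef) :
    ((2 : ℂ) • ((1 : Matrix (Fin d) (Fin d) ℂ) - S) + (4 : ℂ) • T -
      ((1 : Matrix (Fin d) (Fin d) ℂ) - pinvSqrt (S + T) * S * pinvSqrt (S + T))).PosSemidef := by
  open scoped Matrix.Norms.L2Operator MatrixOrder in
  have hST := hS.add hT
  rw [← nonneg_iff_posSemidef, sub_nonneg, ofNat_smul_eq_nsmul (R := ℂ) 2,
    ofNat_smul_eq_nsmul (R := ℂ) 4]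
  exact CFC.one_sub_conj_le_of_mul_eq_sqrt hS.nonneg (sub_nonneg.1 hSI.nonneg) hT.nonneg
    (isSelfAdjoint_pinvSqrt _) (pinvSqrt_mul_self hST.nonneg)
    (pinvSqrt_mul_mul_pinvSqrt_le_one hST.isHermitian)
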